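/- Let λ₁, λ₂ > 0 with λ₁ ≠ λ₂ and G₀(r) = −(1/(2π(λ₁²−λ₂²)))[K₀(λ₁r) − K₀(λ₂r)]. Then G₀ is C¹ on [0,∞) (after continuous extension), i.e., G₀ and G₀' extend continuously to r = 0, with G₀'(0) = 0. -/

import Mathlib

/-!
Substituting `w = r sinh t` gives `K₀(a r) = ∫₀^∞ e^{-a√(w²+r²)} / √(w²+r²) dw` and
`r K₁(a r) = ∫₀^∞ e^{-a√(w²+r²)} dw`. The difference of the first integrands for `a` and `b` is
dominated by `|a - b| e^{-min(a,b) w}`, so `K₀(λ₁ r) - K₀(λ₂ r)` converges (to a Frullani integral)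
by dominated convergence. Since `∫₀^∞ e^{-a w} dw = 1/a`,
`a K₁(a r) - 1/r = (a/r) ∫₀^∞ (e^{-a√(w²+r²)} - e^{-a w}) dw`; the integrand is dominated by
`a² e^{-a w}` and tends to `0` because `r ↦ √(w²+r²)` has derivative `0` at `r = 0`. Hence the `1/r`
singularities of `λ₁ K₁(λ₁ r)` and `λ₂ K₁(λ₂ r)` cancel, and `G₀' ∝ λ₁ K₁(λ₁ r) - λ₂ K₁(λ₂ r) → 0`.
-/

open Real MeasureTheory

/-- Modified Bessel function of the second kind of order zero,
via the integral representation `K₀(x) = ∫₀^∞ exp(-x cosh t) dt`. -/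
noncomputable def K0 (x : ℝ) : ℝ :=
  ∫ t in Set.Ioi (0 : ℝ), Real.exp (-x * Real.cosh t)

/-- Modified Bessel function of the second kind of order one,
via the integral representation `K₁(x) = ∫₀^∞ exp(-x cosh t) cosh t dt`. -/
noncomputable def K1 (x : ℝ) : ℝ :=
  ∫ t in Set.Ioi (0 : ℝ), Real.exp (-x * Real.cosh t) * Real.cosh t


open Filter Topology

open Set

lemma self_le_cosh (t : ℝ) : t ≤ cosh t := by
  rcases le_total 0 t with ht | ht
  · exact (self_le_sinh_iff.2 ht).trans (sinh_lt_cosh t).le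
  · exact ht.trans (cosh_pos t).le

lemma abs_exp_neg_sub_exp_neg_le (p q : ℝ) :
    |exp (-p) - exp (-q)| ≤ |p - q| * exp (-min p q) := by
  wlog hpq : p ≤ q generalizing p q
  · simpa only [abs_sub_comm, min_comm] using this q p (le_of_not_ge hpq)
  have hexp : exp (-q) = exp (-p) * exp (-(q - p)) := by rw [← exp_add]; ring_nf
  have hmono : exp (-q) ≤ exp (-p) := exp_le_exp.2 (neg_le_neg hpq)
  rw [min_eq_left hpq, abs_of_nonneg (sub_nonneg.2 hmono), abs_sub_comm,
    abs_of_nonneg (sub_nonneg.2 hpq), hexp]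
  nlinarith [add_one_le_exp (-(q - p)), exp_pos (-p)]

lemma mul_exp_neg_mul_le {c : ℝ} (hc : 0 < c) (x : ℝ) :
    x * exp (-c * x) ≤ 2 / c * exp (-(c / 2) * x) := by
  have hsplit : exp (-c * x) = exp (-(c / 2) * x) * exp (-(c / 2) * x) := by
    rw [← exp_add]; ring_nf
  have hinv : exp (-(c / 2) * x) * exp (c / 2 * x) = 1 := by rw [← exp_add]; simp
  have hx : c / 2 * x * exp (-(c / 2) * x) ≤ 1 := by
    rw [← hinv, mul_comm (exp _)]
    exact mul_le_mul_of_nonneg_right (by linarith [add_one_le_exp (c / 2 * x)]) (exp_pos _).le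
  rw [hsplit, ← mul_assoc]
  refine mul_le_mul_of_nonneg_right ?_ (exp_pos _).le
  rw [le_div_iff₀ hc]
  linarith

lemma integrableOn_exp_neg_mul_cosh {c : ℝ} (hc : 0 < c) :
    IntegrableOn (fun t => exp (-c * cosh t)) (Ioi 0) := by
  refine (exp_neg_integrableOn_Ioi 0 hc).mono' (by fun_prop) (ae_of_all _ fun t => ?_)
  rw [norm_of_nonneg (exp_pos _).le]
  exact exp_le_exp.2 (by nlinarith [self_le_cosh t])

lemma integrableOn_exp_neg_mul_cosh_mul_cosh {c : ℝ} (hc : 0 < c) :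
    IntegrableOn (fun t => exp (-c * cosh t) * cosh t) (Ioi 0) := by
  refine ((exp_neg_integrableOn_Ioi 0 (half_pos hc)).const_mul (2 / c)).mono' (by fun_prop)
    (ae_of_all _ fun t => ?_)
  rw [norm_of_nonneg (mul_pos (exp_pos _) (cosh_pos t)).le, mul_comm]
  calc cosh t * exp (-c * cosh t) ≤ 2 / c * exp (-(c / 2) * cosh t) := mul_exp_neg_mul_le hc _
    _ ≤ 2 / c * exp (-(c / 2) * t) := by
      gcongr _ * exp ?_
      nlinarith [self_le_cosh t]

theorem hasDerivAt_K0 {x : ℝ} (hx : 0 < x) : HasDerivAt K0 (-K1 x) x := by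
  have hK1 : ∫ t in Ioi 0, exp (-x * cosh t) * -cosh t = -K1 x := by
    rw [K1, ← integral_neg]
    simp only [mul_neg]
  rw [← hK1]
  refine (hasDerivAt_integral_of_dominated_loc_of_deriv_le
    (F := fun y t => exp (-y * cosh t)) (F' := fun y t => exp (-y * cosh t) * -cosh t)
    (bound := fun t => exp (-(x / 2) * cosh t) * cosh t)
    (Metric.ball_mem_nhds x (half_pos hx)) (Eventually.of_forall fun y => by fun_prop)
    (integrableOn_exp_neg_mul_cosh hx) (by fun_prop) (ae_of_all _ fun t y hy => ?_)
    (integrableOn_exp_neg_mul_cosh_mul_cosh (half_pos hx)) (ae_of_all _ fun t y _ => ?_)).2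
  · rw [Metric.mem_ball, Real.dist_eq, abs_sub_lt_iff] at hy
    rw [norm_mul, norm_neg, norm_of_nonneg (exp_pos _).le, norm_of_nonneg (cosh_pos t).le]
    gcongr
    nlinarith [cosh_pos t]
  · simpa using ((hasDerivAt_id y).neg.mul_const (cosh t)).exp

lemma hasDerivAt_K0_const_mul {a r : ℝ} (ha : 0 < a) (hr : 0 < r) :
    HasDerivAt (fun r => K0 (a * r)) (-(a * K1 (a * r))) r :=
  ((hasDerivAt_K0 (mul_pos ha hr)).comp r (hasDerivAt_const_mul a)).congr_deriv (by ring)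

lemma image_const_mul_sinh_Ioi {r : ℝ} (hr : 0 < r) :
    (fun t => r * sinh t) '' Ioi 0 = Ioi 0 := by
  have hsinh : sinh '' Ioi 0 = Ioi 0 := by simpa using sinhOrderIso.image_Ioi 0
  rw [show (fun t => r * sinh t) = (r * ·) ∘ sinh from rfl, image_comp, hsinh,
    image_mul_left_Ioi hr, mul_zero]

lemma integral_Ioi_eq_integral_const_mul_sinh {r : ℝ} (hr : 0 < r) (g : ℝ → ℝ) :
    ∫ w in Ioi 0, g w = ∫ t in Ioi 0, r * cosh t * g (r * sinh t) := by
  have h := integral_image_eq_integral_abs_deriv_smul (measurableSet_Ioi (a := 0))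
    (fun t _ => ((hasDerivAt_sinh t).const_mul r).hasDerivWithinAt)
    (((mul_right_injective₀ hr.ne').comp sinh_injective).injOn) g
  rw [image_const_mul_sinh_Ioi hr] at h
  rw [h]
  refine setIntegral_congr_fun measurableSet_Ioi fun t _ => ?_
  rw [smul_eq_mul, abs_of_pos (mul_pos hr (cosh_pos t))]

lemma sqrt_const_mul_sinh_sq_add_sq {r : ℝ} (hr : 0 ≤ r) (t : ℝ) :
    √((r * sinh t) ^ 2 + r ^ 2) = r * cosh t := by
  rw [← sqrt_sq (mul_nonneg hr (cosh_pos t).le), mul_pow, mul_pow, cosh_sq]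
  ring_nf

lemma K0_mul_sub_K0_mul_eq_integral {a b r : ℝ} (ha : 0 < a) (hb : 0 < b) (hr : 0 < r) :
    K0 (a * r) - K0 (b * r) = ∫ w in Ioi 0,
      (exp (-a * √(w ^ 2 + r ^ 2)) - exp (-b * √(w ^ 2 + r ^ 2))) / √(w ^ 2 + r ^ 2) := by
  rw [K0, K0, ← integral_sub (integrableOn_exp_neg_mul_cosh (mul_pos ha hr))
    (integrableOn_exp_neg_mul_cosh (mul_pos hb hr)), integral_Ioi_eq_integral_const_mul_sinh hr
    (fun w => (exp (-a * √(w ^ 2 + r ^ 2)) - exp (-b * √(w ^ 2 + r ^ 2))) / √(w ^ 2 + r ^ 2))]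
  refine setIntegral_congr_fun measurableSet_Ioi fun t _ => ?_
  rw [sqrt_const_mul_sinh_sq_add_sq hr.le, mul_div_cancel₀ _ (mul_pos hr (cosh_pos t)).ne']
  ring_nf

lemma mul_K1_mul_eq_integral (a : ℝ) {r : ℝ} (hr : 0 < r) :
    r * K1 (a * r) = ∫ w in Ioi 0, exp (-a * √(w ^ 2 + r ^ 2)) := by
  rw [integral_Ioi_eq_integral_const_mul_sinh hr, K1, ← integral_const_mul]
  refine setIntegral_congr_fun measurableSet_Ioi fun t _ => ?_
  rw [sqrt_const_mul_sinh_sq_add_sq hr.le]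
  ring_nf

lemma le_sqrt_sq_add_sq (w r : ℝ) : w ≤ √(w ^ 2 + r ^ 2) :=
  le_sqrt_of_sq_le (le_add_of_nonneg_right (sq_nonneg r))

lemma tendsto_sqrt_sq_add_sq_nhdsGT_zero {w : ℝ} (hw : 0 ≤ w) :
    Tendsto (fun r => √(w ^ 2 + r ^ 2)) (𝓝[>] 0) (𝓝 w) := by
  refine ((by fun_prop : Continuous fun r : ℝ => √(w ^ 2 + r ^ 2)).tendsto' 0 w ?_).mono_left
    nhdsWithin_le_nhds
  simp [sqrt_sq hw]

lemma abs_exp_neg_mul_sub_exp_neg_mul_le {x : ℝ} (hx : 0 ≤ x) (a b : ℝ) :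
    |exp (-a * x) - exp (-b * x)| ≤ |a - b| * x * exp (-min a b * x) := by
  have h := abs_exp_neg_sub_exp_neg_le (a * x) (b * x)
  rwa [← sub_mul, abs_mul, abs_of_nonneg hx, ← min_mul_of_nonneg _ _ hx, ← neg_mul, ← neg_mul,
    ← neg_mul] at h

lemma tendsto_K0_mul_sub_K0_mul {a b : ℝ} (ha : 0 < a) (hb : 0 < b) :
    Tendsto (fun r => K0 (a * r) - K0 (b * r)) (𝓝[>] 0)
      (𝓝 (∫ w in Ioi 0, (exp (-a * w) - exp (-b * w)) / w)) := by
  refine Tendsto.congr' (eventually_nhdsWithin_of_forall fun r hr =>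
    (K0_mul_sub_K0_mul_eq_integral ha hb hr).symm) ?_
  refine tendsto_integral_filter_of_dominated_convergence
    (fun w => |a - b| * exp (-min a b * w))
    (Eventually.of_forall fun r => Measurable.aestronglyMeasurable (by fun_prop))
    (eventually_nhdsWithin_of_forall fun r (hr : 0 < r) => ?_)
    ((exp_neg_integrableOn_Ioi 0 (lt_min ha hb)).const_mul _)
    (ae_restrict_of_forall_mem measurableSet_Ioi fun w (hw : 0 < w) => ?_)
  · refine ae_restrict_of_forall_mem measurableSet_Ioi fun w (hw : 0 < w) => ?_
    set S := √(w ^ 2 + r ^ 2)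
    have hS : 0 < S := hw.trans_le (le_sqrt_sq_add_sq w r)
    rw [norm_div, norm_of_nonneg hS.le, div_le_iff₀ hS]
    calc ‖exp (-a * S) - exp (-b * S)‖ ≤ |a - b| * S * exp (-min a b * S) :=
          abs_exp_neg_mul_sub_exp_neg_mul_le hS.le a b
      _ ≤ |a - b| * S * exp (-min a b * w) := by
          gcongr _ * exp ?_
          nlinarith [lt_min ha hb, le_sqrt_sq_add_sq w r]
      _ = |a - b| * exp (-min a b * w) * S := by ring
  · have hS := tendsto_sqrt_sq_add_sq_nhdsGT_zero hw.le
    exact (((continuous_exp.tendsto _).comp (hS.const_mul (-a))).sub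
      ((continuous_exp.tendsto _).comp (hS.const_mul (-b)))).div hS hw.ne'

lemma integrableOn_exp_neg_mul_sqrt {a : ℝ} (ha : 0 < a) (r : ℝ) :
    IntegrableOn (fun w => exp (-a * √(w ^ 2 + r ^ 2))) (Ioi 0) :=
  (exp_neg_integrableOn_Ioi 0 ha).mono' (Measurable.aestronglyMeasurable (by fun_prop))
    (ae_restrict_of_forall_mem measurableSet_Ioi fun w (hw : 0 < w) => by
      rw [norm_of_nonneg (exp_pos _).le]
      exact exp_le_exp.2 (by nlinarith [le_sqrt_sq_add_sq w r]))

lemma mul_K1_mul_sub_inv_eq_integral {a r : ℝ} (ha : 0 < a) (hr : 0 < r) :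
    a * K1 (a * r) - r⁻¹ =
      ∫ w in Ioi 0, a / r * (exp (-a * √(w ^ 2 + r ^ 2)) - exp (-a * w)) := by
  have hexp : ∫ w in Ioi 0, exp (-a * w) = a⁻¹ := by
    simpa using integral_exp_mul_Ioi (neg_neg_iff_pos.2 ha) 0
  rw [integral_const_mul, integral_sub (integrableOn_exp_neg_mul_sqrt ha r)
    (exp_neg_integrableOn_Ioi 0 ha), ← mul_K1_mul_eq_integral a hr, hexp]
  field_simp

lemma sqrt_sq_add_sq_sub_le {w r : ℝ} (hw : 0 ≤ w) (hr : 0 ≤ r) : √(w ^ 2 + r ^ 2) - w ≤ r := by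
  rw [sub_le_iff_le_add', sqrt_le_left (by positivity)]
  nlinarith

lemma tendsto_sqrt_sq_add_sq_sub_div {w : ℝ} (hw : 0 < w) :
    Tendsto (fun r => (√(w ^ 2 + r ^ 2) - w) / r) (𝓝[>] 0) (𝓝 0) := by
  have h : HasDerivAt (fun r => √(w ^ 2 + r ^ 2)) 0 0 := by
    simpa using ((hasDerivAt_pow 2 (0 : ℝ)).const_add (w ^ 2)).sqrt (by positivity)
  simpa [sqrt_sq hw.le, div_eq_inv_mul] using h.tendsto_slope_zero_right

lemma abs_exp_neg_mul_sqrt_sub_exp_neg_mul_le {a : ℝ} (ha : 0 ≤ a) (w r : ℝ) :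
    |exp (-a * √(w ^ 2 + r ^ 2)) - exp (-a * w)| ≤ a * (√(w ^ 2 + r ^ 2) - w) * exp (-a * w) := by
  have hwS := le_sqrt_sq_add_sq w r
  have h := abs_exp_neg_sub_exp_neg_le (a * √(w ^ 2 + r ^ 2)) (a * w)
  rwa [← mul_sub, abs_mul, abs_of_nonneg ha, abs_of_nonneg (sub_nonneg.2 hwS),
    min_eq_right (mul_le_mul_of_nonneg_left hwS ha), ← neg_mul, ← neg_mul] at h

lemma tendsto_mul_K1_mul_sub_inv {a : ℝ} (ha : 0 < a) :
    Tendsto (fun r => a * K1 (a * r) - r⁻¹) (𝓝[>] 0) (𝓝 0) := by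
  have hbound : ∀ r > 0, ∀ w,
      ‖a / r * (exp (-a * √(w ^ 2 + r ^ 2)) - exp (-a * w))‖ ≤
        a ^ 2 * exp (-a * w) * ((√(w ^ 2 + r ^ 2) - w) / r) := fun r hr w => by
    rw [norm_mul, norm_div, norm_of_nonneg ha.le, norm_of_nonneg hr.le, Real.norm_eq_abs]
    calc a / r * |exp (-a * √(w ^ 2 + r ^ 2)) - exp (-a * w)|
        ≤ a / r * (a * (√(w ^ 2 + r ^ 2) - w) * exp (-a * w)) := by
          gcongr
          exact abs_exp_neg_mul_sqrt_sub_exp_neg_mul_le ha.le w r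
      _ = a ^ 2 * exp (-a * w) * ((√(w ^ 2 + r ^ 2) - w) / r) := by ring
  refine Tendsto.congr' (eventually_nhdsWithin_of_forall fun r hr =>
    (mul_K1_mul_sub_inv_eq_integral ha hr).symm) ?_
  suffices Tendsto (fun r => ∫ w in Ioi 0, a / r * (exp (-a * √(w ^ 2 + r ^ 2)) - exp (-a * w)))
      (𝓝[>] 0) (𝓝 (∫ _ in Ioi (0 : ℝ), (0 : ℝ))) by simpa
  refine tendsto_integral_filter_of_dominated_convergence (fun w => a ^ 2 * exp (-a * w))
    (Eventually.of_forall fun r => Measurable.aestronglyMeasurable (by fun_prop))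
    (eventually_nhdsWithin_of_forall fun r (hr : 0 < r) => ?_)
    ((exp_neg_integrableOn_Ioi 0 ha).const_mul _)
    (ae_restrict_of_forall_mem measurableSet_Ioi fun w (hw : 0 < w) => ?_)
  · refine ae_restrict_of_forall_mem measurableSet_Ioi fun w (hw : 0 < w) => ?_
    refine (hbound r hr w).trans (mul_le_of_le_one_right (by positivity) ?_)
    rw [div_le_one hr]
    exact sqrt_sq_add_sq_sub_le hw.le hr.le
  · refine squeeze_zero_norm' (eventually_nhdsWithin_of_forall fun r hr => hbound r hr w) ?_
    simpa using (tendsto_sqrt_sq_add_sq_sub_div hw).const_mul (a ^ 2 * exp (-a * w))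

theorem stmt18_general (lam1 lam2 : ℝ) (h1 : 0 < lam1) (h2 : 0 < lam2)
    (G0 : ℝ → ℝ)
    (hG0 : ∀ r, G0 r = -(1 / (2 * π * (lam1 ^ 2 - lam2 ^ 2))) *
      (K0 (lam1 * r) - K0 (lam2 * r))) :
    (∃ L : ℝ, Tendsto G0 (𝓝[>] (0 : ℝ)) (𝓝 L)) ∧
    Tendsto (deriv G0) (𝓝[>] (0 : ℝ)) (𝓝 0) := by
  set c := -(1 / (2 * π * (lam1 ^ 2 - lam2 ^ 2)))
  have hG : G0 = fun r => c * (K0 (lam1 * r) - K0 (lam2 * r)) := funext hG0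
  have hderiv : ∀ r > 0, deriv G0 r =
      -c * ((lam1 * K1 (lam1 * r) - r⁻¹) - (lam2 * K1 (lam2 * r) - r⁻¹)) := fun r hr => by
    have hG' : HasDerivAt G0 (c * (-(lam1 * K1 (lam1 * r)) - -(lam2 * K1 (lam2 * r)))) r :=
      hG ▸ ((hasDerivAt_K0_const_mul h1 hr).sub (hasDerivAt_K0_const_mul h2 hr)).const_mul c
    rw [hG'.deriv]
    ring
  refine ⟨⟨_, hG ▸ (tendsto_K0_mul_sub_K0_mul h1 h2).const_mul c⟩, ?_⟩
  have hlim := ((tendsto_mul_K1_mul_sub_inv h1).sub (tendsto_mul_K1_mul_sub_inv h2)).const_mul (-c)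
  rw [sub_zero, mul_zero] at hlim
  exact hlim.congr' (eventually_nhdsWithin_of_forall fun r hr => (hderiv r hr).symm)

/-- For `λ₁ ≠ λ₂` positive and
`G₀(r) = -(1/(2π(λ₁²-λ₂²))) [K₀(λ₁ r) - K₀(λ₂ r)]`, both `G₀` and `G₀'`
extend continuously to `r = 0`, with `G₀'(0) = 0`; i.e. `G₀` is `C¹` on
`[0,∞)` after continuous extension. -/
theorem stmt18 (lam1 lam2 : ℝ) (h1 : 0 < lam1) (h2 : 0 < lam2) (hne : lam1 ≠ lam2)
    (G0 : ℝ → ℝ)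
    (hG0 : ∀ r, G0 r = -(1 / (2 * π * (lam1 ^ 2 - lam2 ^ 2))) *
      (K0 (lam1 * r) - K0 (lam2 * r))) :
    (∃ L : ℝ, Tendsto G0 (𝓝[>] (0 : ℝ)) (𝓝 L)) ∧
    Tendsto (deriv G0) (𝓝[>] (0 : ℝ)) (𝓝 0) :=
  stmt18_general lam1 lam2 h1 h2 G0 hG0
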